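/- Let M be a matching with |M| < ⌈s/2⌉. Then there exists at least one augmentation of M, i.e., a matching M' of the form M' = (M ∖ C) ∪ Aug(C) for some maximal chain C of M (possibly an empty chain) with |M'| = |M| + 1. -/
import Mathlib


/-- A matching in the line graph with edges `e_1, …, e_s`: a subset of `{1, …, s}`
containing no two consecutive integers. -/
def IsMatching (s : ℕ) (M : Finset ℕ) : Prop :=
  M ⊆ Finset.Icc 1 s ∧ ∀ i ∈ M, i + 1 ∉ M

/-- The chain `{i, i+2, …, i+2(t-1)}` with `t` elements (empty when `t = 0`). -/
def chainSet (i t : ℕ) : Finset ℕ :=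
  (Finset.range t).image (fun j => i + 2 * j)

/-- The augmentation of the chain `chainSet i t`: for `t ≥ 1` it is
`{i-1, i+1, i+3, …, i+2(t-1)+1} ∩ {1, …, s}`; for the `i`-th empty chain (`t = 0`)
it is `{i}`. -/
def augSet (s i t : ℕ) : Finset ℕ :=
  if t = 0 then {i}
  else ((Finset.range (t + 1)).image (fun j => i - 1 + 2 * j)) ∩ Finset.Icc 1 s

/-- `chainSet i t` is a maximal chain of `M` (for `t = 0`, the `i`-th empty chain). -/
def IsMaximalChain (s : ℕ) (M : Finset ℕ) (i t : ℕ) : Prop :=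
  if t = 0 then
    i ∈ Finset.Icc 1 s ∧ (i - 1) ∉ M ∧ i ∉ M ∧ (i + 1) ∉ M
  else
    chainSet i t ⊆ M ∧ (i - 2) ∉ M ∧ (i + 2 * t) ∉ M

/-- `M'` is an augmentation of the matching `M`: it is a matching of the form
`(M ∖ C) ∪ Aug(C)` for some maximal chain `C` of `M` (possibly an empty chain),
with `|M'| = |M| + 1`. -/
def IsAugmentation (s : ℕ) (M M' : Finset ℕ) : Prop :=
  IsMatching s M' ∧ M'.card = M.card + 1 ∧
    ∃ i t, IsMaximalChain s M i t ∧ M' = (M \ chainSet i t) ∪ augSet s i t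

lemma mem_chainSet {i t x : ℕ} : x ∈ chainSet i t ↔ ∃ j < t, x = i + 2 * j := by
  simp [chainSet, eq_comm]

lemma card_chainSet (i t : ℕ) : (chainSet i t).card = t := by
  rw [chainSet, Finset.card_image_of_injective _ (fun a b h => by omega)]
  simp

lemma zero_not_mem {s : ℕ} {M : Finset ℕ} (hM : IsMatching s M) : 0 ∉ M := by
  intro h
  have := Finset.mem_Icc.mp (hM.1 h)
  omega

lemma pred_notMem {s : ℕ} {M : Finset ℕ} (hM : IsMatching s M) {i : ℕ} (hi : i ∈ M) :
    i - 1 ∉ M := by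
  intro h
  have h1 : 1 ≤ i := (Finset.mem_Icc.mp (hM.1 hi)).1
  have := hM.2 (i - 1) h
  have heq : i - 1 + 1 = i := by omega
  rw [heq] at this
  exact this hi

/-- extract the maximal chain ending at `e`. -/
lemma exists_maxchain (s : ℕ) (M : Finset ℕ) (hM : IsMatching s M) (e : ℕ) (he : e ∈ M) :
    ∃ i t, 1 ≤ t ∧ e = i + 2 * (t - 1) ∧ chainSet i t ⊆ M ∧ i - 2 ∉ M ∧ 1 ≤ i := by
  induction e using Nat.strong_induction_on with
  | _ e ih =>
    by_cases h : e - 2 ∈ M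
    · have h1 : 1 ≤ e - 2 := (Finset.mem_Icc.mp (hM.1 h)).1
      obtain ⟨i, t, ht, heq, hsub, hl, hi⟩ := ih (e - 2) (by omega) h
      refine ⟨i, t + 1, by omega, by omega, ?_, hl, hi⟩
      intro x hx
      rw [mem_chainSet] at hx
      obtain ⟨j, hj, rfl⟩ := hx
      by_cases hj' : j < t
      · exact hsub (mem_chainSet.mpr ⟨j, hj', rfl⟩)
      · have hjt : j = t := by omega
        have hxe : i + 2 * j = e := by omega
        rwa [hxe]
    · refine ⟨e, 1, le_refl _, by omega, ?_, h, (Finset.mem_Icc.mp (hM.1 he)).1⟩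
      intro x hx
      rw [mem_chainSet] at hx
      obtain ⟨j, hj, rfl⟩ := hx
      have : j = 0 := by omega
      subst this
      simpa using he

lemma aug_zero (s : ℕ) (M : Finset ℕ) (hM : IsMatching s M) (i : ℕ)
    (hi : i ∈ Finset.Icc 1 s) (h0 : i - 1 ∉ M) (h1 : i ∉ M) (h2 : i + 1 ∉ M) :
    IsAugmentation s M (insert i M) := by
  obtain ⟨hi1, his⟩ := Finset.mem_Icc.mp hi
  refine ⟨⟨?_, ?_⟩, ?_, i, 0, ?_, ?_⟩
  · exact Finset.insert_subset hi hM.1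
  · intro x hx hx'
    rcases Finset.mem_insert.mp hx with rfl | hxM
    · rcases Finset.mem_insert.mp hx' with heq | hx'M
      · omega
      · exact h2 hx'M
    · rcases Finset.mem_insert.mp hx' with heq | hx'M
      · have : x = i - 1 := by omega
        exact h0 (this ▸ hxM)
      · exact hM.2 x hxM hx'M
  · rw [Finset.card_insert_of_notMem h1]
  · simp only [IsMaximalChain, if_pos rfl]
    exact ⟨hi, h0, h1, h2⟩
  · have hchain : chainSet i 0 = ∅ := by simp [chainSet]
    have haug : augSet s i 0 = {i} := by simp [augSet]
    rw [hchain, haug, Finset.sdiff_empty]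
    ext x
    simp [Finset.mem_insert, Finset.mem_union, or_comm]

lemma aug_pos (s : ℕ) (M : Finset ℕ) (hM : IsMatching s M) (i t : ℕ)
    (ht : 1 ≤ t) (hi : 2 ≤ i) (hs : i + 2 * t ≤ s + 1)
    (hC : chainSet i t ⊆ M) (hl : i - 2 ∉ M) (hr : i + 2 * t ∉ M) :
    IsAugmentation s M ((M \ chainSet i t) ∪ augSet s i t) := by
  have htne : t ≠ 0 := by omega
  have hA : augSet s i t = (Finset.range (t + 1)).image (fun j => i - 1 + 2 * j) := by
    rw [augSet, if_neg htne, Finset.inter_eq_left]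
    intro x hx
    simp only [Finset.mem_image, Finset.mem_range] at hx
    obtain ⟨j, hj, rfl⟩ := hx
    rw [Finset.mem_Icc]
    omega
  have memA : ∀ x, x ∈ augSet s i t ↔ ∃ j ≤ t, x = i - 1 + 2 * j := by
    intro x
    rw [hA]
    simp [Nat.lt_succ_iff, eq_comm]
  have hiM : i ∈ M := hC (mem_chainSet.mpr ⟨0, by omega, by omega⟩)
  have hAM : ∀ x ∈ augSet s i t, x ∉ M := by
    intro x hx
    rw [memA] at hx
    obtain ⟨j, hj, rfl⟩ := hx
    rcases Nat.eq_zero_or_pos j with rfl | hj0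
    · intro h
      have : i - 1 + 2 * 0 = i - 1 := by omega
      rw [this] at h
      have := hM.2 (i - 1) h
      have heq : i - 1 + 1 = i := by omega
      rw [heq] at this
      exact this hiM
    · have hm : i + 2 * (j - 1) ∈ M := hC (mem_chainSet.mpr ⟨j - 1, by omega, rfl⟩)
      have := hM.2 _ hm
      have heq : i + 2 * (j - 1) + 1 = i - 1 + 2 * j := by omega
      rwa [heq] at this
  have hsub : augSet s i t ⊆ Finset.Icc 1 s := by
    rw [augSet, if_neg htne]
    exact Finset.inter_subset_right
  have hcardA : (augSet s i t).card = t + 1 := by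
    rw [hA, Finset.card_image_of_injective _ (fun a b h => by omega), Finset.card_range]
  have htM : t ≤ M.card := card_chainSet i t ▸ Finset.card_le_card hC
  refine ⟨⟨?_, ?_⟩, ?_, i, t, ?_, rfl⟩
  · exact Finset.union_subset ((Finset.sdiff_subset).trans hM.1) hsub
  · intro x hx hx'
    rcases Finset.mem_union.mp hx with hxM | hxA
    · obtain ⟨hxM, hxC⟩ := Finset.mem_sdiff.mp hxM
      rcases Finset.mem_union.mp hx' with hx'M | hx'A
      · exact hM.2 x hxM (Finset.mem_sdiff.mp hx'M).1
      · rw [memA] at hx'A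
        obtain ⟨j, hj, hje⟩ := hx'A
        rcases Nat.eq_zero_or_pos j with rfl | hj0
        · have : x = i - 2 := by omega
          exact hl (this ▸ hxM)
        · exact hxC (mem_chainSet.mpr ⟨j - 1, by omega, by omega⟩)
    · rw [memA] at hxA
      obtain ⟨j, hj, rfl⟩ := hxA
      rcases Finset.mem_union.mp hx' with hx'M | hx'A
      · obtain ⟨hx'M, hx'C⟩ := Finset.mem_sdiff.mp hx'M
        by_cases hjt : j < t
        · exact hx'C (mem_chainSet.mpr ⟨j, hjt, by omega⟩)
        · have : i - 1 + 2 * j + 1 = i + 2 * t := by omega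
          exact hr (this ▸ hx'M)
      · rw [memA] at hx'A
        obtain ⟨k, hk, hke⟩ := hx'A
        omega
  · have hdisj : Disjoint (M \ chainSet i t) (augSet s i t) :=
      Finset.disjoint_left.mpr (fun x hx hx' => hAM x hx' (Finset.mem_sdiff.mp hx).1)
    rw [Finset.card_union_of_disjoint hdisj, Finset.card_sdiff_of_subset hC, card_chainSet, hcardA]
    omega
  · simp only [IsMaximalChain, if_neg htne]
    exact ⟨hC, hl, hr⟩

/-- Every matching `M` with `|M| < ⌈s/2⌉` admits at least one augmentation. -/
theorem stmt_6 (s : ℕ) (M : Finset ℕ) (hM : IsMatching s M)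
    (hcard : M.card < (s + 1) / 2) :
    ∃ M' : Finset ℕ, IsAugmentation s M M' := by
  have hs1 : 1 ≤ s := by
    rcases Nat.eq_zero_or_pos s with rfl | h
    · simp at hcard
    · exact h
  by_cases hsM : s ∈ M
  · obtain ⟨i, t, ht, heq, hsub, hl, hi1⟩ := exists_maxchain s M hM s hsM
    have hcount : t ≤ M.card := card_chainSet i t ▸ Finset.card_le_card hsub
    have hi3 : 3 ≤ i := by omega
    have hiM : i ∈ M := hsub (mem_chainSet.mpr ⟨0, by omega, by omega⟩)
    have hi1m : i - 1 ∉ M := pred_notMem hM hiM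
    by_cases h3 : i - 3 ∈ M
    · obtain ⟨j, t', ht', heq', hsub', hl', hj1⟩ := exists_maxchain s M hM (i - 3) h3
      have hdisj : Disjoint (chainSet j t') (chainSet i t) := by
        rw [Finset.disjoint_left]
        intro a h1 h2
        rw [mem_chainSet] at h1 h2
        obtain ⟨k1, hk1, he1⟩ := h1
        obtain ⟨k2, hk2, he2⟩ := h2
        omega
      have hcount2 : t' + t ≤ M.card := by
        have := Finset.card_le_card (Finset.union_subset hsub' hsub)
        rwa [Finset.card_union_of_disjoint hdisj, card_chainSet, card_chainSet] at this
      have hj2 : 2 ≤ j := by omega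
      refine ⟨_, aug_pos s M hM j t' ht' hj2 (by omega) hsub' hl' ?_⟩
      have : j + 2 * t' = i - 1 := by omega
      rw [this]
      exact hi1m
    · refine ⟨_, aug_zero s M hM (i - 2) (Finset.mem_Icc.mpr ⟨by omega, by omega⟩) ?_ hl ?_⟩
      · have : i - 2 - 1 = i - 3 := by omega
        rw [this]; exact h3
      · have : i - 2 + 1 = i - 1 := by omega
        rw [this]; exact hi1m
  · by_cases hs1M : s - 1 ∈ M
    · obtain ⟨i, t, ht, heq, hsub, hl, hi1⟩ := exists_maxchain s M hM (s - 1) hs1M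
      have hs2 : 2 ≤ s := by
        have := (Finset.mem_Icc.mp (hM.1 hs1M)).1
        omega
      have hcount : t ≤ M.card := card_chainSet i t ▸ Finset.card_le_card hsub
      have hi2 : 2 ≤ i := by omega
      refine ⟨_, aug_pos s M hM i t ht hi2 (by omega) hsub hl ?_⟩
      intro h
      have := (Finset.mem_Icc.mp (hM.1 h)).2
      omega
    · refine ⟨_, aug_zero s M hM s (Finset.mem_Icc.mpr ⟨hs1, le_refl s⟩) hs1M hsM ?_⟩
      intro h
      have := (Finset.mem_Icc.mp (hM.1 h)).2
      omega
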